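/- arXiv:2406.09951 — 8 statements merged into one kernel-verified Lean document; each statement's English description precedes it below -/
import Mathlib

section
/- Let C ⊆ 𝔽₂ⁿ⊕𝔽₂ⁿ be a quantum code (isotropic subspace). Then the symplectic double 𝔇(C) ⊆ 𝔽₂^{2n}⊕𝔽₂^{2n} is a quantum code on 2n qubits which is CSS, dim 𝔇(C) = 2·dim C, and dim(𝔇(C)⊥/𝔇(C)) = 2·dim(C⊥/C); i.e. if C has parameters [[n,k]] then 𝔇(C) has parameters [[2n,2k]]. -/
open scoped BigOperators

abbrev F2 := ZMod 2

/-- Pauli vector space on qubit index set `ι`: X part and Z part. -/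
abbrev PV (ι : Type) := (ι → F2) × (ι → F2)

/-- The symplectic form `⟨v,w⟩ = v_X·w_Z + v_Z·w_X`. -/
def sform {ι : Type} [Fintype ι] (v w : PV ι) : F2 :=
  ∑ i, (v.1 i * w.2 i + v.2 i * w.1 i)

/-- A quantum code is an isotropic subspace. -/
def Isotropic {ι : Type} [Fintype ι] (C : Submodule F2 (PV ι)) : Prop :=
  ∀ u ∈ C, ∀ v ∈ C, sform u v = 0

/-- The logical space `C⊥ = {v | ∀ c ∈ C, ⟨v,c⟩ = 0}`. -/
def perp {ι : Type} [Fintype ι] (C : Submodule F2 (PV ι)) : Submodule F2 (PV ι) where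
  carrier := {v | ∀ c ∈ C, sform v c = 0}
  zero_mem' := by intro c _; simp [sform]
  add_mem' := by
    intro a b ha hb c hc
    have h : sform (a + b) c = sform a c + sform b c := by
      simp only [sform, Prod.fst_add, Prod.snd_add, Pi.add_apply]
      rw [← Finset.sum_add_distrib]
      exact Finset.sum_congr rfl fun i _ => by ring
    rw [h, ha c hc, hb c hc, add_zero]
  smul_mem' := by
    intro r a ha c hc
    have h : sform (r • a) c = r * sform a c := by
      simp only [sform, Prod.smul_fst, Prod.smul_snd, Pi.smul_apply, smul_eq_mul]
      rw [Finset.mul_sum]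
      exact Finset.sum_congr rfl fun i _ => by ring
    rw [h, ha c hc, mul_zero]

/-- The weight of a Pauli vector. -/
def wt {ι : Type} [Fintype ι] (v : PV ι) : ℕ :=
  (Finset.univ.filter fun i => ¬(v.1 i = 0 ∧ v.2 i = 0)).card

/-- `k = dim(C⊥/C)`, the number of logical qubits. -/
noncomputable def logDim {ι : Type} [Fintype ι] (C : Submodule F2 (PV ι)) : ℕ :=
  Module.finrank F2 (↥(perp C) ⧸ Submodule.comap (perp C).subtype C)

/-- `C` has parameters `[[n,k,d]]`. -/
def HasParams {ι : Type} [Fintype ι] (C : Submodule F2 (PV ι)) (k d : ℕ) : Prop :=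
  logDim C = k ∧ (∀ v ∈ perp C, v ∉ C → d ≤ wt v) ∧ ∃ v ∈ perp C, v ∉ C ∧ wt v = d

/-- The symplectic double of a code, spanned by `((c_X,c_Z),(0,0))` and `((0,0),(c_Z,c_X))`. -/
def dbl {n : ℕ} (C : Submodule F2 (PV (Fin n))) : Submodule F2 (PV (Fin n ⊕ Fin n)) :=
  Submodule.span F2
    (((fun c : PV (Fin n) => ((Sum.elim c.1 c.2, 0) : PV (Fin n ⊕ Fin n))) ''
        (C : Set (PV (Fin n)))) ∪
     ((fun c : PV (Fin n) => ((0, Sum.elim c.2 c.1) : PV (Fin n ⊕ Fin n))) ''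
        (C : Set (PV (Fin n)))))

/-- CSS property: `C = (C ∩ (𝔽₂ⁿ⊕0)) ⊕ (C ∩ (0⊕𝔽₂ⁿ))`. -/
def IsCSS {ι : Type} (C : Submodule F2 (PV ι)) : Prop :=
  C = (C ⊓ Submodule.prod ⊤ ⊥) ⊔ (C ⊓ Submodule.prod ⊥ ⊤)

/-- Qubit permutation acting simultaneously on the X and Z parts. -/
def permPV {ι : Type} (σ : Equiv.Perm ι) (v : PV ι) : PV ι :=
  (v.1 ∘ σ.symm, v.2 ∘ σ.symm)


section Aux

open Submodule

lemma sform_add_right {ι : Type} [Fintype ι] (v a b : PV ι) :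
    sform v (a + b) = sform v a + sform v b := by
  simp only [sform, Prod.fst_add, Prod.snd_add, Pi.add_apply]
  rw [← Finset.sum_add_distrib]
  exact Finset.sum_congr rfl fun i _ => by ring

lemma sform_smul_right {ι : Type} [Fintype ι] (r : F2) (v a : PV ι) :
    sform v (r • a) = r * sform v a := by
  simp only [sform, Prod.smul_fst, Prod.smul_snd, Pi.smul_apply, smul_eq_mul]
  rw [Finset.mul_sum]
  exact Finset.sum_congr rfl fun i _ => by ring

lemma sform_comm {ι : Type} [Fintype ι] (v w : PV ι) : sform v w = sform w v :=
  Finset.sum_congr rfl fun i _ => by ring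

lemma sform_zero_right {ι : Type} [Fintype ι] (v : PV ι) : sform v 0 = 0 := by
  simp [sform]

/-- The linear map `c ↦ ((c_X,c_Z),(0,0))`. -/
def mapA (n : ℕ) : PV (Fin n) →ₗ[F2] PV (Fin n ⊕ Fin n) where
  toFun c := (Sum.elim c.1 c.2, 0)
  map_add' a b := by
    refine Prod.ext (funext fun i => ?_) (by simp)
    cases i <;> simp
  map_smul' r a := by
    refine Prod.ext (funext fun i => ?_) (by simp)
    cases i <;> simp

/-- The linear map `c ↦ ((0,0),(c_Z,c_X))`. -/
def mapB (n : ℕ) : PV (Fin n) →ₗ[F2] PV (Fin n ⊕ Fin n) where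
  toFun c := (0, Sum.elim c.2 c.1)
  map_add' a b := by
    refine Prod.ext (by simp) (funext fun i => ?_)
    cases i <;> simp
  map_smul' r a := by
    refine Prod.ext (by simp) (funext fun i => ?_)
    cases i <;> simp

lemma mapA_inj (n : ℕ) : Function.Injective (mapA n) := by
  intro a b h
  have h1 : Sum.elim a.1 a.2 = Sum.elim b.1 b.2 := congrArg Prod.fst h
  refine Prod.ext (funext fun i => ?_) (funext fun i => ?_)
  · exact congrFun h1 (Sum.inl i)
  · exact congrFun h1 (Sum.inr i)

lemma mapB_inj (n : ℕ) : Function.Injective (mapB n) := by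
  intro a b h
  have h1 : Sum.elim a.2 a.1 = Sum.elim b.2 b.1 := congrArg Prod.snd h
  refine Prod.ext (funext fun i => ?_) (funext fun i => ?_)
  · exact congrFun h1 (Sum.inr i)
  · exact congrFun h1 (Sum.inl i)

lemma dbl_eq {n : ℕ} (C : Submodule F2 (PV (Fin n))) :
    dbl C = Submodule.map (mapA n) C ⊔ Submodule.map (mapB n) C := by
  unfold dbl
  rw [Submodule.span_union]
  congr 1
  · rw [show (fun c : PV (Fin n) => ((Sum.elim c.1 c.2, 0) : PV (Fin n ⊕ Fin n)))
        = ⇑(mapA n) from rfl, Submodule.span_image, Submodule.span_eq]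
  · rw [show (fun c : PV (Fin n) => ((0, Sum.elim c.2 c.1) : PV (Fin n ⊕ Fin n)))
        = ⇑(mapB n) from rfl, Submodule.span_image, Submodule.span_eq]

lemma sform_AA {n : ℕ} (u v : PV (Fin n)) : sform (mapA n u) (mapA n v) = 0 := by
  simp [sform, mapA]

lemma sform_BB {n : ℕ} (u v : PV (Fin n)) : sform (mapB n u) (mapB n v) = 0 := by
  simp [sform, mapB]

lemma sform_AB {n : ℕ} (u v : PV (Fin n)) : sform (mapA n u) (mapB n v) = sform u v := by
  simp only [sform, mapA, mapB, LinearMap.coe_mk, AddHom.coe_mk, Pi.zero_apply,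
    mul_zero, zero_mul, add_zero, zero_add, Fintype.sum_sum_type, Sum.elim_inl, Sum.elim_inr]
  rw [← Finset.sum_add_distrib]

lemma sform_BA {n : ℕ} (u v : PV (Fin n)) : sform (mapB n u) (mapA n v) = sform v u := by
  simp only [sform, mapA, mapB, LinearMap.coe_mk, AddHom.coe_mk, Pi.zero_apply,
    mul_zero, zero_mul, add_zero, zero_add, Fintype.sum_sum_type, Sum.elim_inl, Sum.elim_inr]
  rw [← Finset.sum_add_distrib]
  exact Finset.sum_congr rfl fun i _ => by ring

lemma sform_vA {n : ℕ} (v : PV (Fin n ⊕ Fin n)) (c : PV (Fin n)) :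
    sform v (mapA n c) = sform (v.2 ∘ Sum.inr, v.2 ∘ Sum.inl) c := by
  simp only [sform, mapA, LinearMap.coe_mk, AddHom.coe_mk, Pi.zero_apply,
    mul_zero, zero_mul, add_zero, zero_add, Fintype.sum_sum_type, Sum.elim_inl, Sum.elim_inr,
    Function.comp_apply]
  rw [← Finset.sum_add_distrib]
  exact Finset.sum_congr rfl fun i _ => by ring

lemma sform_vB {n : ℕ} (v : PV (Fin n ⊕ Fin n)) (c : PV (Fin n)) :
    sform v (mapB n c) = sform (v.1 ∘ Sum.inl, v.1 ∘ Sum.inr) c := by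
  simp only [sform, mapB, LinearMap.coe_mk, AddHom.coe_mk, Pi.zero_apply,
    mul_zero, zero_mul, add_zero, zero_add, Fintype.sum_sum_type, Sum.elim_inl, Sum.elim_inr,
    Function.comp_apply]
  rw [← Finset.sum_add_distrib]

lemma v_decomp {n : ℕ} (v : PV (Fin n ⊕ Fin n)) :
    v = mapA n (v.1 ∘ Sum.inl, v.1 ∘ Sum.inr) + mapB n (v.2 ∘ Sum.inr, v.2 ∘ Sum.inl) := by
  refine Prod.ext (funext fun i => ?_) (funext fun i => ?_) <;>
    cases i <;> simp [mapA, mapB]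

lemma map_inf_bot {n : ℕ} (P Q : Submodule F2 (PV (Fin n))) :
    Submodule.map (mapA n) P ⊓ Submodule.map (mapB n) Q = ⊥ := by
  rw [eq_bot_iff]
  rintro x ⟨hxA, hxB⟩
  obtain ⟨a, _, ha⟩ := hxA
  obtain ⟨b, _, hb⟩ := hxB
  have h1 : x.2 = 0 := by rw [← ha]; rfl
  have h2 : x.1 = 0 := by rw [← hb]; rfl
  have : x = 0 := Prod.ext h2 h1
  simp [this]

lemma finrank_map_sup {n : ℕ} (P Q : Submodule F2 (PV (Fin n))) :
    Module.finrank F2 ↥(Submodule.map (mapA n) P ⊔ Submodule.map (mapB n) Q) =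
      Module.finrank F2 P + Module.finrank F2 Q := by
  have h := Submodule.finrank_sup_add_finrank_inf_eq
    (Submodule.map (mapA n) P) (Submodule.map (mapB n) Q)
  rw [map_inf_bot, finrank_bot] at h
  have hA : Module.finrank F2 ↥(Submodule.map (mapA n) P) = Module.finrank F2 P :=
    ((Submodule.equivMapOfInjective (mapA n) (mapA_inj n) P).finrank_eq).symm
  have hB : Module.finrank F2 ↥(Submodule.map (mapB n) Q) = Module.finrank F2 Q :=
    ((Submodule.equivMapOfInjective (mapB n) (mapB_inj n) Q).finrank_eq).symm
  omega

lemma perp_dbl {n : ℕ} (C : Submodule F2 (PV (Fin n))) :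
    perp (dbl C) = Submodule.map (mapA n) (perp C) ⊔ Submodule.map (mapB n) (perp C) := by
  apply le_antisymm
  · intro v hv
    have hu : (v.1 ∘ Sum.inl, v.1 ∘ Sum.inr) ∈ perp C := by
      intro c hc
      rw [← sform_vB]
      exact hv (mapB n c) (Submodule.subset_span (Or.inr ⟨c, hc, rfl⟩))
    have hw : (v.2 ∘ Sum.inr, v.2 ∘ Sum.inl) ∈ perp C := by
      intro c hc
      rw [← sform_vA]
      exact hv (mapA n c) (Submodule.subset_span (Or.inl ⟨c, hc, rfl⟩))
    rw [v_decomp v]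
    exact Submodule.add_mem_sup (Submodule.mem_map_of_mem hu) (Submodule.mem_map_of_mem hw)
  · refine sup_le ?_ ?_
    · rintro x ⟨u, hu, rfl⟩
      intro c hc
      refine Submodule.span_induction ?_ (sform_zero_right _) ?_ ?_ hc
      · rintro x (⟨a, _, rfl⟩ | ⟨a, ha, rfl⟩)
        · exact sform_AA u a
        · show sform (mapA n u) (mapB n a) = 0
          rw [sform_AB]; exact hu a ha
      · intro a b _ _ ha hb
        rw [sform_add_right, ha, hb, add_zero]
      · intro r a _ ha
        rw [sform_smul_right, ha, mul_zero]
    · rintro x ⟨u, hu, rfl⟩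
      intro c hc
      refine Submodule.span_induction ?_ (sform_zero_right _) ?_ ?_ hc
      · rintro x (⟨a, ha, rfl⟩ | ⟨a, _, rfl⟩)
        · show sform (mapB n u) (mapA n a) = 0
          rw [sform_BA, sform_comm]; exact hu a ha
        · exact sform_BB u a
      · intro a b _ _ ha hb
        rw [sform_add_right, ha, hb, add_zero]
      · intro r a _ ha
        rw [sform_smul_right, ha, mul_zero]

set_option synthInstance.maxHeartbeats 1000000 in
lemma logDim_add {ι : Type} [Fintype ι] [FiniteDimensional F2 (PV ι)]
    (D : Submodule F2 (PV ι)) (hle : D ≤ perp D) :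
    logDim D + Module.finrank F2 D = Module.finrank F2 (perp D) := by
  have h := Submodule.finrank_quotient_add_finrank (Submodule.comap (perp D).subtype D)
  have h2 : Module.finrank F2 ↥(Submodule.comap (perp D).subtype D) = Module.finrank F2 D :=
    (Submodule.comapSubtypeEquivOfLe hle).finrank_eq
  unfold logDim
  omega

end Aux

/-- If `C ⊆ 𝔽₂ⁿ⊕𝔽₂ⁿ` is a quantum code (isotropic subspace), then the symplectic double
`𝔇(C)` is a CSS quantum code on `2n` qubits, with `dim 𝔇(C) = 2·dim C` and
`dim(𝔇(C)⊥/𝔇(C)) = 2·dim(C⊥/C)`: an `[[n,k]]` code doubles to a `[[2n,2k]]` code. -/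
theorem stmt5 {n : ℕ} (C : Submodule F2 (PV (Fin n))) (hC : Isotropic C) :
    Isotropic (dbl C) ∧ IsCSS (dbl C) ∧
    Module.finrank F2 (dbl C) = 2 * Module.finrank F2 C ∧
    logDim (dbl C) = 2 * logDim C := by
  have hiso : Isotropic (dbl C) := by
    intro u hu v hv
    rw [dbl_eq] at hu hv
    obtain ⟨a, ⟨a1, ha1, rfl⟩, b, ⟨b1, hb1, rfl⟩, rfl⟩ := Submodule.mem_sup.mp hu
    obtain ⟨c, ⟨c1, hc1, rfl⟩, d, ⟨d1, hd1, rfl⟩, rfl⟩ := Submodule.mem_sup.mp hv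
    have e1 : sform (mapA n a1) (mapA n c1 + mapB n d1) = sform a1 d1 := by
      rw [sform_add_right, sform_AA, sform_AB, zero_add]
    have e2 : sform (mapB n b1) (mapA n c1 + mapB n d1) = sform c1 b1 := by
      rw [sform_add_right, sform_BA, sform_BB, add_zero]
    have e3 : sform (mapA n a1 + mapB n b1) (mapA n c1 + mapB n d1)
        = sform a1 d1 + sform c1 b1 := by
      have : ∀ w : PV (Fin n ⊕ Fin n),
          sform (mapA n a1 + mapB n b1) w = sform (mapA n a1) w + sform (mapB n b1) w := by
        intro w
        simp only [sform, Prod.fst_add, Prod.snd_add, Pi.add_apply]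
        rw [← Finset.sum_add_distrib]
        exact Finset.sum_congr rfl fun i _ => by ring
      rw [this, e1, e2]
    rw [e3, hC a1 ha1 d1 hd1, hC c1 hc1 b1 hb1, add_zero]
  have hCSS : IsCSS (dbl C) := by
    apply le_antisymm
    · rw [dbl_eq]
      refine sup_le (le_sup_of_le_left (le_inf ?_ ?_)) (le_sup_of_le_right (le_inf ?_ ?_))
      · rw [← dbl_eq]; exact le_sup_left.trans (le_of_eq (dbl_eq C).symm) |>.trans le_rfl
      · rintro x ⟨a, _, rfl⟩
        exact Submodule.mem_prod.mpr ⟨trivial, rfl⟩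
      · rw [← dbl_eq]; exact le_sup_right.trans (le_of_eq (dbl_eq C).symm) |>.trans le_rfl
      · rintro x ⟨a, _, rfl⟩
        exact Submodule.mem_prod.mpr ⟨rfl, trivial⟩
    · exact sup_le inf_le_left inf_le_left
  have hrk : Module.finrank F2 (dbl C) = 2 * Module.finrank F2 C := by
    rw [dbl_eq, finrank_map_sup]; ring
  refine ⟨hiso, hCSS, hrk, ?_⟩
  have hCle : C ≤ perp C := fun v hv c hc => hC v hv c hc
  have hDle : dbl C ≤ perp (dbl C) := fun v hv c hc => hiso v hv c hc
  have h1 := logDim_add C hCle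
  have h2 := logDim_add (dbl C) hDle
  have h3 : Module.finrank F2 (perp (dbl C)) = 2 * Module.finrank F2 (perp C) := by
    rw [perp_dbl, finrank_map_sup]; ring
  omega
end

section
/- Let C ⊆ 𝔽₂ⁿ⊕𝔽₂ⁿ be a quantum code and d a positive integer such that every v ∈ C⊥ ∖ C has weight w(v) ≥ d. Then every element of 𝔇(C)⊥ ∖ 𝔇(C) has weight at least d (weights computed on the 2n qubits of the double). In particular, if C has parameters [[n,k,d]] then 𝔇(C) has parameters [[2n,2k,d′]] with d′ ≥ d. -/
open scoped BigOperators

/-- If every `v ∈ C⊥ ∖ C` has weight at least `d`, then every element of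
`𝔇(C)⊥ ∖ 𝔇(C)` has weight at least `d`: an `[[n,k,d]]` code doubles to a
`[[2n,2k,d′]]` code with `d′ ≥ d`. -/
theorem stmt6 {n : ℕ} (C : Submodule F2 (PV (Fin n))) (hC : Isotropic C)
    (d : ℕ) (hd : 0 < d)
    (hmin : ∀ v ∈ perp C, v ∉ C → d ≤ wt v) :
    ∀ v ∈ perp (dbl C), v ∉ dbl C → d ≤ wt v := by
  intro v hv hvn
  set b : PV (Fin n) := (fun i => v.1 (Sum.inl i), fun i => v.1 (Sum.inr i)) with hbdef
  set a : PV (Fin n) := (fun i => v.2 (Sum.inr i), fun i => v.2 (Sum.inl i)) with hadef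
  have hbperp : b ∈ perp C := by
    intro c hc
    have hgen : ((0, Sum.elim c.2 c.1) : PV (Fin n ⊕ Fin n)) ∈ dbl C :=
      Submodule.subset_span (Or.inr ⟨c, hc, rfl⟩)
    have h := hv _ hgen
    have heq : sform v ((0, Sum.elim c.2 c.1) : PV (Fin n ⊕ Fin n)) = sform b c := by
      simp only [sform, Fintype.sum_sum_type, Prod.fst, Prod.snd, Pi.zero_apply, Sum.elim_inl,
        Sum.elim_inr, mul_zero, add_zero, hbdef]
      rw [Finset.sum_add_distrib]
      try ring
    rw [← heq]; exact h
  have haperp : a ∈ perp C := by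
    intro c hc
    have hgen : ((Sum.elim c.1 c.2, 0) : PV (Fin n ⊕ Fin n)) ∈ dbl C :=
      Submodule.subset_span (Or.inl ⟨c, hc, rfl⟩)
    have h := hv _ hgen
    have heq : sform v ((Sum.elim c.1 c.2, 0) : PV (Fin n ⊕ Fin n)) = sform a c := by
      simp only [sform, Fintype.sum_sum_type, Prod.fst, Prod.snd, Pi.zero_apply, Sum.elim_inl,
        Sum.elim_inr, zero_mul, mul_zero, zero_add, add_zero, hadef]
      rw [Finset.sum_add_distrib]
      try ring
    rw [← heq]; exact h
  have hmem : a ∈ C → b ∈ C → v ∈ dbl C := by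
    intro haC hbC
    have hsplit : v = ((Sum.elim b.1 b.2, 0) : PV (Fin n ⊕ Fin n))
        + ((0, Sum.elim a.2 a.1) : PV (Fin n ⊕ Fin n)) := by
      refine Prod.ext ?_ ?_ <;> funext j <;> cases j <;>
        simp [hbdef, hadef]
    rw [hsplit]
    exact Submodule.add_mem _
      (Submodule.subset_span (Or.inl ⟨b, hbC, rfl⟩))
      (Submodule.subset_span (Or.inr ⟨a, haC, rfl⟩))
  have hwtb : wt b ≤ wt v := by
    rw [wt, wt, Finset.card_filter, Finset.card_filter, Fintype.sum_sum_type,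
      ← Finset.sum_add_distrib]
    refine Finset.sum_le_sum fun i _ => ?_
    simp only [hbdef]
    by_cases h1 : v.1 (Sum.inl i) = 0 <;> by_cases h2 : v.1 (Sum.inr i) = 0 <;>
      simp [h1, h2] <;> split_ifs <;> omega
  have hwta : wt a ≤ wt v := by
    rw [wt, wt, Finset.card_filter, Finset.card_filter, Fintype.sum_sum_type,
      ← Finset.sum_add_distrib]
    refine Finset.sum_le_sum fun i _ => ?_
    simp only [hadef]
    by_cases h1 : v.2 (Sum.inl i) = 0 <;> by_cases h2 : v.2 (Sum.inr i) = 0 <;>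
      simp [h1, h2] <;> split_ifs <;> omega
  by_cases haC : a ∈ C
  · by_cases hbC : b ∈ C
    · exact absurd (hmem haC hbC) hvn
    · exact le_trans (hmin b hbperp hbC) hwtb
  · exact le_trans (hmin a haperp haC) hwta
end

section
/- Let C ⊆ 𝔽₂ⁿ⊕𝔽₂ⁿ be a quantum code with parameters [[n,k,d]] and set t = ⌊(d−1)/2⌋. Let u ∈ 𝔽₂^{2n} = 𝔽₂ⁿ×𝔽₂ⁿ, written u = (u₁,u₂) with u₁,u₂ ∈ 𝔽₂ⁿ, be supported on at most t fibers, i.e. the number of base qubits i with (u₁ i, u₂ i) ≠ (0,0) is at most t. If the pure Z-type vector (0, u) ∈ 𝔽₂^{2n}⊕𝔽₂^{2n} lies in 𝔇(C)⊥ (equivalently u is orthogonal to every X-type stabilizer (c_X,c_Z) of 𝔇(C)), then (0,u) ∈ 𝔇(C); equivalently u lies in the span of {(c_Z,c_X) : c ∈ C}. Hence Z-type errors arising on whole fibers from fiber-transversal gates, of combined weight up to t fibers, are correctable: any two such errors with equal syndrome differ by a Z-type stabilizer of 𝔇(C). -/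
open scoped BigOperators

/-- Let `C` have parameters `[[n,k,d]]` and `t = ⌊(d−1)/2⌋`.  If `u = (u₁,u₂)` is
supported on at most `t` fibers and the pure Z-type vector `(0,u)` lies in `𝔇(C)⊥`,
then `(0,u) ∈ 𝔇(C)`.  Hence fiber-supported Z-type errors of combined weight up to
`t` fibers are correctable. -/
theorem stmt7 {n k d : ℕ} (C : Submodule F2 (PV (Fin n)))
    (hC : Isotropic C) (hP : HasParams C k d)
    (u₁ u₂ : Fin n → F2)
    (hsupp : (Finset.univ.filter fun i => ¬(u₁ i = 0 ∧ u₂ i = 0)).card ≤ (d - 1) / 2)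
    (hperp : ((0, Sum.elim u₁ u₂) : PV (Fin n ⊕ Fin n)) ∈ perp (dbl C)) :
    ((0, Sum.elim u₁ u₂) : PV (Fin n ⊕ Fin n)) ∈ dbl C := by
  have hvC : ((u₂, u₁) : PV (Fin n)) ∈ C := by
    by_contra hnot
    -- (u₂, u₁) ∈ perp C
    have hvperp : ((u₂, u₁) : PV (Fin n)) ∈ perp C := by
      intro c hc
      have hg : ((Sum.elim c.1 c.2, 0) : PV (Fin n ⊕ Fin n)) ∈ dbl C :=
        Submodule.subset_span (Or.inl ⟨c, hc, rfl⟩)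
      have h0 := hperp _ hg
      simp only [sform, Fintype.sum_sum_type, Sum.elim_inl, Sum.elim_inr,
        Prod.fst_zero, Prod.snd_zero, Pi.zero_apply, mul_zero, zero_mul,
        zero_add, add_zero] at h0 ⊢
      rw [Finset.sum_add_distrib, add_comm]
      exact h0
    have hwt : wt ((u₂, u₁) : PV (Fin n)) ≤ (d - 1) / 2 := by
      have : (Finset.univ.filter fun i : Fin n => ¬(u₂ i = 0 ∧ u₁ i = 0))
          = (Finset.univ.filter fun i : Fin n => ¬(u₁ i = 0 ∧ u₂ i = 0)) := by
        apply Finset.filter_congr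
        intro i _
        constructor <;> (intro h h'; exact h ⟨h'.2, h'.1⟩)
      unfold wt
      rw [this]
      exact hsupp
    have hd : d ≤ wt ((u₂, u₁) : PV (Fin n)) := hP.2.1 _ hvperp hnot
    have hd1 : 1 ≤ d := by
      by_contra hd0
      obtain ⟨w, hwp, hwn, hwtd⟩ := hP.2.2
      have hw0 : wt w = 0 := by omega
      have : w = 0 := by
        have hall : ∀ i, w.1 i = 0 ∧ w.2 i = 0 := by
          intro i
          by_contra hcon
          have : i ∈ Finset.univ.filter fun i => ¬(w.1 i = 0 ∧ w.2 i = 0) := by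
            exact Finset.mem_filter.mpr ⟨Finset.mem_univ i, hcon⟩
          have := Finset.card_pos.mpr ⟨i, this⟩
          unfold wt at hw0; omega
        ext i
        · exact (hall i).1
        · exact (hall i).2
      exact hwn (this ▸ C.zero_mem)
    omega
  exact Submodule.subset_span (Or.inr ⟨(u₂, u₁), hvC, rfl⟩)
end

section
/- Let C′ ⊆ 𝔽₂ⁿ⊕𝔽₂ⁿ be any quantum code. Then its symplectic double 𝔇(C′) ⊆ 𝔽₂^{2n}⊕𝔽₂^{2n} is a CSS code whose X-stabilizer space is S_X = {(c_X,c_Z) : c ∈ C′} and Z-stabilizer space is S_Z = {(c_Z,c_X) : c ∈ C′}, and the permutation τ of the 2n qubits sending i ↔ n+i (for each i ∈ {1,…,n}) is a fixed-point-free involution with τ·S_X = S_Z and τ·S_Z = S_X; that is, τ is a fixed-point-free involutory ZX-duality of 𝔇(C′). -/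
open scoped BigOperators

namespace Stmt8Aux

def fmap (n : ℕ) : PV (Fin n) →ₗ[F2] (Fin n ⊕ Fin n → F2) where
  toFun c := Sum.elim c.1 c.2
  map_add' a b := by funext i; cases i <;> rfl
  map_smul' r a := by funext i; cases i <;> rfl

def gmap (n : ℕ) : PV (Fin n) →ₗ[F2] (Fin n ⊕ Fin n → F2) where
  toFun c := Sum.elim c.2 c.1
  map_add' a b := by funext i; cases i <;> rfl
  map_smul' r a := by funext i; cases i <;> rfl

lemma dbl_eq {n : ℕ} (C : Submodule F2 (PV (Fin n))) :
    dbl C = Submodule.prod (C.map (fmap n)) (C.map (gmap n)) := by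
  apply le_antisymm
  · rw [dbl]
    apply Submodule.span_le.mpr
    rintro x (⟨c, hc, rfl⟩ | ⟨c, hc, rfl⟩)
    · exact ⟨⟨c, hc, rfl⟩, Submodule.zero_mem _⟩
    · exact ⟨Submodule.zero_mem _, ⟨c, hc, rfl⟩⟩
  · rintro ⟨x, y⟩ ⟨hx, hy⟩
    obtain ⟨c, hc, rfl⟩ := hx
    obtain ⟨d, hd, rfl⟩ := hy
    have h1 : ((Sum.elim c.1 c.2, 0) : PV (Fin n ⊕ Fin n)) ∈ dbl C :=
      Submodule.subset_span (Or.inl ⟨c, hc, rfl⟩)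
    have h2 : ((0, Sum.elim d.2 d.1) : PV (Fin n ⊕ Fin n)) ∈ dbl C :=
      Submodule.subset_span (Or.inr ⟨d, hd, rfl⟩)
    have h3 := (dbl C).add_mem h1 h2
    have : ((Sum.elim c.1 c.2, 0) : PV (Fin n ⊕ Fin n)) + (0, Sum.elim d.2 d.1)
        = (Sum.elim c.1 c.2, Sum.elim d.2 d.1) := by
      ext i <;> simp
    rwa [this] at h3

lemma mem_X {n : ℕ} (C : Submodule F2 (PV (Fin n))) (u : Fin n ⊕ Fin n → F2) :
    (((u, 0) : PV (Fin n ⊕ Fin n)) ∈ dbl C) ↔ ∃ c ∈ C, u = Sum.elim c.1 c.2 := by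
  rw [dbl_eq]
  constructor
  · rintro ⟨⟨c, hc, rfl⟩, -⟩; exact ⟨c, hc, rfl⟩
  · rintro ⟨c, hc, rfl⟩; exact ⟨⟨c, hc, rfl⟩, Submodule.zero_mem _⟩

lemma mem_Z {n : ℕ} (C : Submodule F2 (PV (Fin n))) (u : Fin n ⊕ Fin n → F2) :
    (((0, u) : PV (Fin n ⊕ Fin n)) ∈ dbl C) ↔ ∃ c ∈ C, u = Sum.elim c.2 c.1 := by
  rw [dbl_eq]
  constructor
  · rintro ⟨-, ⟨c, hc, rfl⟩⟩; exact ⟨c, hc, rfl⟩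
  · rintro ⟨c, hc, rfl⟩; exact ⟨Submodule.zero_mem _, ⟨c, hc, rfl⟩⟩

end Stmt8Aux

/-- For any quantum code `C′ ⊆ 𝔽₂ⁿ⊕𝔽₂ⁿ`, the symplectic double `𝔇(C′)` is a CSS code
with X-stabilizer space `{(c_X,c_Z) : c ∈ C′}` and Z-stabilizer space
`{(c_Z,c_X) : c ∈ C′}`, and the qubit permutation `τ : i ↔ n+i` (the swap of the two
halves) is a fixed-point-free involution exchanging the X- and Z-stabilizer spaces,
i.e. a fixed-point-free involutory ZX-duality of `𝔇(C′)`. -/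

theorem stmt8 {n : ℕ} (C : Submodule F2 (PV (Fin n))) (hC : Isotropic C) :
    IsCSS (dbl C) ∧
    ({u : Fin n ⊕ Fin n → F2 | ((u, 0) : PV (Fin n ⊕ Fin n)) ∈ dbl C}
      = {w | ∃ c ∈ C, w = Sum.elim c.1 c.2}) ∧
    ({u : Fin n ⊕ Fin n → F2 | ((0, u) : PV (Fin n ⊕ Fin n)) ∈ dbl C}
      = {w | ∃ c ∈ C, w = Sum.elim c.2 c.1}) ∧
    (∀ i, (Equiv.sumComm (Fin n) (Fin n)) i ≠ i) ∧
    (∀ i, (Equiv.sumComm (Fin n) (Fin n)) ((Equiv.sumComm (Fin n) (Fin n)) i) = i) ∧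
    ((fun u : Fin n ⊕ Fin n → F2 => u ∘ (Equiv.sumComm (Fin n) (Fin n)).symm) ''
        {u | ((u, 0) : PV (Fin n ⊕ Fin n)) ∈ dbl C}
      = {u | ((0, u) : PV (Fin n ⊕ Fin n)) ∈ dbl C}) ∧
    ((fun u : Fin n ⊕ Fin n → F2 => u ∘ (Equiv.sumComm (Fin n) (Fin n)).symm) ''
        {u | ((0, u) : PV (Fin n ⊕ Fin n)) ∈ dbl C}
      = {u | ((u, 0) : PV (Fin n ⊕ Fin n)) ∈ dbl C})  := by
  classical
  have hswap : ∀ (a b : Fin n → F2),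
      (Sum.elim a b) ∘ ⇑(Equiv.sumComm (Fin n) (Fin n)).symm = Sum.elim b a := by
    intro a b; funext i; cases i <;> rfl
  refine ⟨?_, ?_, ?_, ?_, ?_, ?_, ?_⟩
  · -- IsCSS
    rw [IsCSS]
    apply le_antisymm
    · intro v hv
      obtain ⟨x, y⟩ := v
      rw [Stmt8Aux.dbl_eq] at hv
      obtain ⟨hx, hy⟩ := hv
      have hx' : ((x, 0) : PV (Fin n ⊕ Fin n)) ∈ dbl C := by
        rw [Stmt8Aux.dbl_eq]; exact ⟨hx, Submodule.zero_mem _⟩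
      have hy' : ((0, y) : PV (Fin n ⊕ Fin n)) ∈ dbl C := by
        rw [Stmt8Aux.dbl_eq]; exact ⟨Submodule.zero_mem _, hy⟩
      have : ((x, y) : PV (Fin n ⊕ Fin n)) = (x, 0) + (0, y) := by ext i <;> simp
      rw [this]
      exact Submodule.add_mem _
        (Submodule.mem_sup_left ⟨hx', ⟨trivial, rfl⟩⟩)
        (Submodule.mem_sup_right ⟨hy', ⟨rfl, trivial⟩⟩)
    · exact sup_le inf_le_left inf_le_left
  · ext u; exact Stmt8Aux.mem_X C u
  · ext u; exact Stmt8Aux.mem_Z C u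
  · rintro (i | i) <;> simp
  · intro i; simp
  · ext w
    simp only [Set.mem_image, Set.mem_setOf_eq, Stmt8Aux.mem_X, Stmt8Aux.mem_Z]
    constructor
    · rintro ⟨u, ⟨c, hc, rfl⟩, rfl⟩
      exact ⟨c, hc, hswap c.1 c.2⟩
    · rintro ⟨c, hc, rfl⟩
      exact ⟨Sum.elim c.1 c.2, ⟨c, hc, rfl⟩, hswap c.1 c.2⟩
  · ext w
    simp only [Set.mem_image, Set.mem_setOf_eq, Stmt8Aux.mem_X, Stmt8Aux.mem_Z]
    constructor
    · rintro ⟨u, ⟨c, hc, rfl⟩, rfl⟩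
      exact ⟨c, hc, hswap c.2 c.1⟩
    · rintro ⟨c, hc, rfl⟩
      exact ⟨Sum.elim c.2 c.1, ⟨c, hc, rfl⟩, hswap c.2 c.1⟩
end

section
/- Let C ⊆ 𝔽₂^{2n}⊕𝔽₂^{2n} be a CSS quantum code on 2n qubits with X-stabilizer space S_X = {u : (u,0) ∈ C} and Z-stabilizer space S_Z = {u : (0,u) ∈ C}, and suppose τ is a fixed-point-free involutive permutation of the 2n coordinates with τ·S_X = S_Z (hence τ·S_Z = S_X). Then there exist a permutation σ of the 2n qubits (acting simultaneously on the X and Z parts) and a quantum code C′ ⊆ 𝔽₂ⁿ⊕𝔽₂ⁿ such that σ·C = 𝔇(C′). -/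
open scoped BigOperators

open Equiv in
lemma cycleType_fpf_inv {ι : Type} [Fintype ι] [DecidableEq ι] (π : Equiv.Perm ι)
    (h : ∀ i, π (π i) = i) (hf : ∀ i, π i ≠ i) :
    π.cycleType = Multiset.replicate (Multiset.card π.cycleType) 2 ∧
      2 * Multiset.card π.cycleType = Fintype.card ι := by
  have hpow : π ^ 2 = 1 := by
    ext i
    simp [pow_succ, Equiv.Perm.mul_apply, h i]
  have hall : ∀ x ∈ π.cycleType, x = 2 := by
    intro x hx
    refine le_antisymm (Nat.le_of_dvd two_pos ?_) (Equiv.Perm.two_le_of_mem_cycleType hx)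
    have h1 : x ∣ π.cycleType.lcm := Multiset.dvd_lcm hx
    rw [Equiv.Perm.lcm_cycleType] at h1
    exact h1.trans (orderOf_dvd_of_pow_eq_one hpow)
  have hrep : π.cycleType = Multiset.replicate (Multiset.card π.cycleType) 2 :=
    Multiset.eq_replicate_card.mpr hall
  have hsupp : π.support = Finset.univ :=
    Finset.eq_univ_iff_forall.mpr fun i => Equiv.Perm.mem_support.mpr (hf i)
  have hsum := Equiv.Perm.sum_cycleType π
  rw [hsupp, Finset.card_univ] at hsum
  refine ⟨hrep, ?_⟩
  rw [← hsum]
  conv_rhs => rw [hrep]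
  rw [Multiset.sum_replicate, smul_eq_mul, mul_comm]

lemma conj_of_fpf_inv {ι : Type} [Fintype ι] [DecidableEq ι] (π₁ π₂ : Equiv.Perm ι)
    (h1 : ∀ i, π₁ (π₁ i) = i) (hf1 : ∀ i, π₁ i ≠ i)
    (h2 : ∀ i, π₂ (π₂ i) = i) (hf2 : ∀ i, π₂ i ≠ i) :
    ∃ ρ : Equiv.Perm ι, ρ * π₁ * ρ⁻¹ = π₂ := by
  obtain ⟨r1, c1⟩ := cycleType_fpf_inv π₁ h1 hf1
  obtain ⟨r2, c2⟩ := cycleType_fpf_inv π₂ h2 hf2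
  have hcard : Multiset.card π₁.cycleType = Multiset.card π₂.cycleType := by omega
  have hconj : IsConj π₁ π₂ :=
    Equiv.Perm.isConj_iff_cycleType_eq.mpr (by rw [r1, r2, hcard])
  exact isConj_iff.mp hconj

/-- The swap permutation on `Fin n ⊕ Fin n`. -/
def swp (n : ℕ) : Equiv.Perm (Fin n ⊕ Fin n) := Equiv.sumComm (Fin n) (Fin n)

/-- The linear map `(c_X, c_Z) ↦ Sum.elim c_X c_Z`. -/
def elimLM (n : ℕ) : PV (Fin n) →ₗ[F2] (Fin n ⊕ Fin n → F2) where
  toFun c := Sum.elim c.1 c.2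
  map_add' a b := by funext j; cases j <;> rfl
  map_smul' r a := by funext j; cases j <;> rfl

/-- If `C` is a CSS quantum code on `2n` qubits admitting a fixed-point-free involutive
ZX-duality `τ` (a permutation of the `2n` coordinates exchanging the X- and Z-stabilizer
spaces), then there exist a qubit permutation `σ` and a quantum code
`C′ ⊆ 𝔽₂ⁿ⊕𝔽₂ⁿ` such that `σ·C = 𝔇(C′)`. -/
theorem stmt9 {n : ℕ} (C : Submodule F2 (PV (Fin n ⊕ Fin n)))
    (hC : Isotropic C) (hCSS : IsCSS C)
    (τ : Equiv.Perm (Fin n ⊕ Fin n))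
    (hinv : ∀ i, τ (τ i) = i) (hfpf : ∀ i, τ i ≠ i)
    (hdual : (fun u : Fin n ⊕ Fin n → F2 => u ∘ ⇑τ.symm) ''
        {u | ((u, 0) : PV (Fin n ⊕ Fin n)) ∈ C}
      = {u | ((0, u) : PV (Fin n ⊕ Fin n)) ∈ C}) :
    ∃ (σ : Equiv.Perm (Fin n ⊕ Fin n)) (C' : Submodule F2 (PV (Fin n))),
      Isotropic C' ∧
      permPV σ '' (C : Set (PV (Fin n ⊕ Fin n))) = (dbl C' : Set (PV (Fin n ⊕ Fin n))) := by
  classical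
  have hinv_e : ∀ i, swp n (swp n i) = i := by rintro (i | i) <;> rfl
  have hfpf_e : ∀ i, swp n i ≠ i := by
    rintro (i | i) h <;> simp [swp] at h
  obtain ⟨ρ, hρ⟩ := conj_of_fpf_inv τ (swp n) hinv hfpf hinv_e hfpf_e
  have hρe : ∀ x, ρ.symm (swp n x) = τ (ρ.symm x) := by
    intro x
    have h1 : ρ (τ (ρ⁻¹ x)) = swp n x := by
      have := congrArg (fun p : Equiv.Perm (Fin n ⊕ Fin n) => p x) hρ
      simpa [Equiv.Perm.mul_apply] using this
    rw [← h1]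
    simp only [Equiv.symm_apply_apply]
    rfl
  have hτs : ∀ y, τ.symm y = τ y := by
    intro y
    conv_lhs => rw [← hinv y]
    exact τ.symm_apply_apply (τ y)
  set Fρ : (Fin n ⊕ Fin n → F2) →ₗ[F2] (Fin n ⊕ Fin n → F2) :=
    LinearMap.funLeft F2 F2 ⇑ρ.symm with hFρ
  set Fτ : (Fin n ⊕ Fin n → F2) →ₗ[F2] (Fin n ⊕ Fin n → F2) :=
    LinearMap.funLeft F2 F2 ⇑τ.symm with hFτ
  set Fe : (Fin n ⊕ Fin n → F2) →ₗ[F2] (Fin n ⊕ Fin n → F2) :=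
    LinearMap.funLeft F2 F2 ⇑(swp n) with hFe
  set L : (Fin n ⊕ Fin n → F2) →ₗ[F2] PV (Fin n) :=
    (LinearMap.funLeft F2 F2 Sum.inl).prod (LinearMap.funLeft F2 F2 Sum.inr) with hL
  set SX : Submodule F2 (Fin n ⊕ Fin n → F2) :=
    C.comap (LinearMap.inl F2 (Fin n ⊕ Fin n → F2) (Fin n ⊕ Fin n → F2)) with hSXdef
  set SZ : Submodule F2 (Fin n ⊕ Fin n → F2) :=
    C.comap (LinearMap.inr F2 (Fin n ⊕ Fin n → F2) (Fin n ⊕ Fin n → F2)) with hSZdef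
  have hSX : ∀ u, u ∈ SX ↔ ((u, 0) : PV (Fin n ⊕ Fin n)) ∈ C := fun u => Iff.rfl
  have hSZ : ∀ u, u ∈ SZ ↔ ((0, u) : PV (Fin n ⊕ Fin n)) ∈ C := fun u => Iff.rfl
  -- C = SX × SZ
  have hcss : C = (C ⊓ Submodule.prod ⊤ ⊥) ⊔ (C ⊓ Submodule.prod ⊥ ⊤) := hCSS
  have hCprod : C = SX.prod SZ := by
    apply le_antisymm
    · intro c hc
      rw [hcss] at hc
      obtain ⟨a, ha, b, hb, rfl⟩ := Submodule.mem_sup.mp hc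
      obtain ⟨haC, ha2⟩ := Submodule.mem_inf.mp ha
      obtain ⟨hbC, hb2⟩ := Submodule.mem_inf.mp hb
      have ha20 : a.2 = 0 := (Submodule.mem_bot F2).mp (Submodule.mem_prod.mp ha2).2
      have hb10 : b.1 = 0 := (Submodule.mem_bot F2).mp (Submodule.mem_prod.mp hb2).1
      have haeq : a = ((a.1, 0) : PV (Fin n ⊕ Fin n)) := Prod.ext rfl ha20
      have hbeq : b = ((0, b.2) : PV (Fin n ⊕ Fin n)) := Prod.ext hb10 rfl
      refine Submodule.mem_prod.mpr ⟨?_, ?_⟩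
      · have h1 : (a + b).1 = a.1 := by
          show a.1 + b.1 = a.1
          rw [hb10, add_zero]
        refine (hSX _).mpr ?_
        rw [h1, ← haeq]
        exact haC
      · have h2 : (a + b).2 = b.2 := by
          show a.2 + b.2 = b.2
          rw [ha20, zero_add]
        refine (hSZ _).mpr ?_
        rw [h2, ← hbeq]
        exact hbC
    · rintro ⟨u, w⟩ hc
      obtain ⟨hu, hw⟩ := Submodule.mem_prod.mp hc
      have heq : ((u, w) : PV (Fin n ⊕ Fin n)) = (u, 0) + (0, w) := by
        rw [Prod.mk_add_mk, add_zero, zero_add]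
      rw [heq]
      exact C.add_mem ((hSX u).mp hu) ((hSZ w).mp hw)
  -- τ relates SX and SZ
  have hSZm : SX.map Fτ = SZ := by
    apply SetLike.coe_injective
    rw [Submodule.map_coe]
    exact hdual
  set U : Submodule F2 (Fin n ⊕ Fin n → F2) := SX.map Fρ with hU
  set W : Submodule F2 (Fin n ⊕ Fin n → F2) := SZ.map Fρ with hWdef
  have hcomm : Fe ∘ₗ Fρ = Fρ ∘ₗ Fτ := by
    apply LinearMap.ext; intro u; funext x
    show u (ρ.symm (swp n x)) = u (τ.symm (ρ.symm x))
    rw [hρe x, hτs]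
  have hW : U.map Fe = W := by
    rw [hWdef, ← hSZm, hU, ← Submodule.map_comp, ← Submodule.map_comp, hcomm]
  set C' : Submodule F2 (PV (Fin n)) := U.map L with hC'
  have hmapE : C'.map (elimLM n) = U := by
    rw [hC', ← Submodule.map_comp]
    have hid : elimLM n ∘ₗ L = LinearMap.id := by
      apply LinearMap.ext; intro u; funext j; cases j <;> rfl
    rw [hid, Submodule.map_id]
  -- the double equals U × W
  have hdbl : dbl C' = U.prod W := by
    have hg1 : (fun c : PV (Fin n) => ((Sum.elim c.1 c.2, 0) : PV (Fin n ⊕ Fin n)))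
        = ⇑((LinearMap.inl F2 (Fin n ⊕ Fin n → F2) (Fin n ⊕ Fin n → F2)) ∘ₗ elimLM n) := rfl
    have hg2 : (fun c : PV (Fin n) => ((0, Sum.elim c.2 c.1) : PV (Fin n ⊕ Fin n)))
        = ⇑((LinearMap.inr F2 (Fin n ⊕ Fin n → F2) (Fin n ⊕ Fin n → F2)) ∘ₗ (Fe ∘ₗ elimLM n)) := by
      funext c
      refine Prod.ext rfl ?_
      funext j
      cases j <;> rfl
    rw [dbl, hg1, hg2, Submodule.span_union, Submodule.span_image, Submodule.span_image,
      Submodule.span_eq, Submodule.map_comp, Submodule.map_comp, Submodule.map_comp,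
      hmapE, hW]
    exact (LinearMap.prod_eq_sup_map U W).symm
  -- the image of C under the permutation equals U × W
  have himg : permPV ρ '' (C : Set (PV (Fin n ⊕ Fin n)))
      = ((U.prod W : Submodule F2 (PV (Fin n ⊕ Fin n))) : Set (PV (Fin n ⊕ Fin n))) := by
    ext v
    constructor
    · rintro ⟨c, hc, rfl⟩
      rw [hCprod] at hc
      obtain ⟨h1, h2⟩ := Submodule.mem_prod.mp hc
      exact Submodule.mem_prod.mpr
        ⟨Submodule.mem_map_of_mem h1, Submodule.mem_map_of_mem h2⟩
    · intro hv
      obtain ⟨h1, h2⟩ := Submodule.mem_prod.mp hv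
      obtain ⟨u, hu, hu'⟩ := h1
      obtain ⟨w, hw, hw'⟩ := h2
      refine ⟨(u, w), ?_, ?_⟩
      · rw [hCprod]; exact Submodule.mem_prod.mpr ⟨hu, hw⟩
      · exact Prod.ext hu' hw'
  -- isotropy of C'
  have hiso : Isotropic C' := by
    intro a ha b hb
    obtain ⟨u, hu, rfl⟩ := ha
    obtain ⟨v, hv, rfl⟩ := hb
    have hFv : Fe v ∈ W := by rw [← hW]; exact Submodule.mem_map_of_mem hv
    obtain ⟨w₀, hw₀, hww⟩ := hFv
    obtain ⟨u₀, hu₀, huu⟩ := hu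
    have key : sform (L u) (L v) = ∑ j : Fin n ⊕ Fin n, u j * (Fe v) j := by
      rw [sform, Fintype.sum_sum_type, ← Finset.sum_add_distrib]
      exact Finset.sum_congr rfl fun i _ => rfl
    have key2 : ∑ j : Fin n ⊕ Fin n, u j * (Fe v) j = ∑ j, u₀ j * w₀ j := by
      rw [← huu, ← hww]
      exact Equiv.sum_comp ρ.symm (fun j => u₀ j * w₀ j)
    have key3 : sform ((u₀, 0) : PV (Fin n ⊕ Fin n)) ((0, w₀) : PV (Fin n ⊕ Fin n))
        = ∑ j, u₀ j * w₀ j := by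
      rw [sform]
      refine Finset.sum_congr rfl fun j _ => ?_
      show u₀ j * w₀ j + 0 * 0 = u₀ j * w₀ j
      ring
    have hzero : sform ((u₀, 0) : PV (Fin n ⊕ Fin n)) ((0, w₀) : PV (Fin n ⊕ Fin n)) = 0 :=
      hC (u₀, 0) ((hSX u₀).mp hu₀) (0, w₀) ((hSZ w₀).mp hw₀)
    rw [key, key2, ← key3, hzero]
  refine ⟨ρ, C', hiso, ?_⟩
  rw [himg, hdbl]
end

section
/- Let C ⊆ 𝔽₂ⁿ⊕𝔽₂ⁿ be a quantum code, let H : 𝔽₂ⁿ⊕𝔽₂ⁿ → 𝔽₂ⁿ⊕𝔽₂ⁿ be the swap (v_X, v_Z) ↦ (v_Z, v_X), and let ι : (𝔽₂ⁿ⊕𝔽₂ⁿ) × (𝔽₂ⁿ⊕𝔽₂ⁿ) → 𝔽₂^{2n}⊕𝔽₂^{2n} be the qubit-placement isomorphism ι((a,b),(c,d)) = ((a,c),(b,d)), placing the first code on qubits 1,…,n and the second on qubits n+1,…,2n. Then C is a CSS code if and only if 𝔇(C) = ι(C × H(C)). -/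
open scoped BigOperators

namespace Stmt12Aux

def fmap (n : ℕ) : PV (Fin n) →ₗ[F2] PV (Fin n ⊕ Fin n) where
  toFun c := (Sum.elim c.1 c.2, 0)
  map_add' a b := by
    refine Prod.ext (funext fun i => ?_) (by simp)
    cases i <;> simp
  map_smul' r a := by
    refine Prod.ext (funext fun i => ?_) (by simp)
    cases i <;> simp

def gmap (n : ℕ) : PV (Fin n) →ₗ[F2] PV (Fin n ⊕ Fin n) where
  toFun c := (0, Sum.elim c.2 c.1)
  map_add' a b := by
    refine Prod.ext (by simp) (funext fun i => ?_)
    cases i <;> simp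
  map_smul' r a := by
    refine Prod.ext (by simp) (funext fun i => ?_)
    cases i <;> simp

theorem elim_inj {n : ℕ} {x y u v : Fin n → F2} (h : Sum.elim x u = Sum.elim y v) :
    x = y ∧ u = v :=
  ⟨funext fun i => congrFun h (Sum.inl i), funext fun i => congrFun h (Sum.inr i)⟩

theorem dbl_eq {n : ℕ} (C : Submodule F2 (PV (Fin n))) :
    dbl C = (C.map (fmap n)) ⊔ (C.map (gmap n)) := by
  rw [dbl, Submodule.span_union]
  have h1 : ((fun c : PV (Fin n) => ((Sum.elim c.1 c.2, 0) : PV (Fin n ⊕ Fin n))) '' ↑C)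
      = ⇑(fmap n) '' ↑C := rfl
  have h2 : ((fun c : PV (Fin n) => ((0, Sum.elim c.2 c.1) : PV (Fin n ⊕ Fin n))) '' ↑C)
      = ⇑(gmap n) '' ↑C := rfl
  rw [h1, h2, Submodule.span_image, Submodule.span_image, Submodule.span_eq]

theorem mem_dbl {n : ℕ} (C : Submodule F2 (PV (Fin n))) (p : PV (Fin n ⊕ Fin n)) :
    p ∈ dbl C ↔ ∃ a ∈ C, ∃ b ∈ C, p = (Sum.elim a.1 a.2, Sum.elim b.2 b.1) := by
  rw [dbl_eq, Submodule.mem_sup]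
  constructor
  · rintro ⟨y, hy, z, hz, rfl⟩
    obtain ⟨a, ha, rfl⟩ := hy
    obtain ⟨b, hb, rfl⟩ := hz
    refine ⟨a, ha, b, hb, ?_⟩
    show (Sum.elim a.1 a.2, (0 : Sum (Fin n) (Fin n) → F2)) + (0, Sum.elim b.2 b.1) = _
    simp [Prod.ext_iff]
  · rintro ⟨a, ha, b, hb, rfl⟩
    refine ⟨fmap n a, ⟨a, ha, rfl⟩, gmap n b, ⟨b, hb, rfl⟩, ?_⟩
    show (Sum.elim a.1 a.2, (0 : Sum (Fin n) (Fin n) → F2)) + (0, Sum.elim b.2 b.1) = _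
    simp [Prod.ext_iff]

theorem set_eq_iff_mix {n : ℕ} (C : Submodule F2 (PV (Fin n))) :
    ((dbl C : Set (PV (Fin n ⊕ Fin n))) =
      {p : PV (Fin n ⊕ Fin n) | ∃ c ∈ C, ∃ c' ∈ C,
        p = (Sum.elim c.1 c'.2, Sum.elim c.2 c'.1)}) ↔
    ∀ a ∈ C, ∀ b ∈ C, ((a.1, b.2) : PV (Fin n)) ∈ C := by
  constructor
  · intro h a ha b hb
    have hp : ((Sum.elim a.1 a.2, Sum.elim b.2 b.1) : PV (Fin n ⊕ Fin n)) ∈ dbl C :=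
      (mem_dbl C _).2 ⟨a, ha, b, hb, rfl⟩
    have hp2 : ((Sum.elim a.1 a.2, Sum.elim b.2 b.1) : PV (Fin n ⊕ Fin n)) ∈
        {p : PV (Fin n ⊕ Fin n) | ∃ c ∈ C, ∃ c' ∈ C,
          p = (Sum.elim c.1 c'.2, Sum.elim c.2 c'.1)} := by
      rw [← h]; exact hp
    obtain ⟨c, hc, c', hc', heq⟩ := hp2
    rw [Prod.ext_iff] at heq
    obtain ⟨h1, h2⟩ := heq
    obtain ⟨e1, e2⟩ := elim_inj h1
    obtain ⟨e3, e4⟩ := elim_inj h2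
    have : c = ((a.1, b.2) : PV (Fin n)) := Prod.ext e1.symm e3.symm
    exact this ▸ hc
  · intro hmix
    ext p
    rw [SetLike.mem_coe, mem_dbl]
    constructor
    · rintro ⟨a, ha, b, hb, rfl⟩
      exact ⟨(a.1, b.2), hmix a ha b hb, (b.1, a.2), hmix b hb a ha, rfl⟩
    · rintro ⟨c, hc, c', hc', rfl⟩
      exact ⟨(c.1, c'.2), hmix c hc c' hc', (c'.1, c.2), hmix c' hc' c hc, rfl⟩

theorem css_iff_mix {n : ℕ} (C : Submodule F2 (PV (Fin n))) :
    IsCSS C ↔ ∀ a ∈ C, ∀ b ∈ C, ((a.1, b.2) : PV (Fin n)) ∈ C := by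
  constructor
  · intro h a ha b hb
    rw [IsCSS] at h
    rw [h, Submodule.mem_sup] at ha hb
    obtain ⟨u, ⟨huC, hu⟩, v, ⟨hvC, hv⟩, rfl⟩ := ha
    obtain ⟨u', ⟨huC', hu'⟩, v', ⟨hvC', hv'⟩, rfl⟩ := hb
    simp only [SetLike.mem_coe, Submodule.mem_prod, Submodule.mem_bot] at hu hv hu' hv'
    have : ((( (u+v).1, (u'+v').2)) : PV (Fin n)) = u + v' := by
      rw [Prod.ext_iff]
      constructor
      · show u.1 + v.1 = u.1 + v'.1
        rw [hv.1, hv'.1]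
      · show u'.2 + v'.2 = u.2 + v'.2
        rw [hu'.2, hu.2]
    rw [h, this]
    exact Submodule.mem_sup.2 ⟨u, ⟨huC, hu⟩, v', ⟨hvC', hv'⟩, rfl⟩
  · intro hmix
    refine le_antisymm ?_ (sup_le inf_le_left inf_le_left)
    intro a ha
    have h1 : ((a.1, 0) : PV (Fin n)) ∈ C := hmix a ha 0 C.zero_mem
    have h2 : ((0, a.2) : PV (Fin n)) ∈ C := hmix 0 C.zero_mem a ha
    have : a = ((a.1, 0) : PV (Fin n)) + (0, a.2) := by
      rw [Prod.ext_iff]; constructor <;> simp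
    rw [this]
    exact Submodule.add_mem _
      (Submodule.mem_sup_left ⟨h1, by simp [Submodule.mem_prod]⟩)
      (Submodule.mem_sup_right ⟨h2, by simp [Submodule.mem_prod]⟩)

end Stmt12Aux

/-- `C` is CSS iff `𝔇(C) = ι(C × H(C))`, where `H` swaps the X and Z parts and
`ι((a,b),(c,d)) = ((a,c),(b,d))` places the first code on qubits `1,…,n` and the
second on qubits `n+1,…,2n`. -/
theorem stmt12 {n : ℕ} (C : Submodule F2 (PV (Fin n))) (hC : Isotropic C) :
    IsCSS C ↔ (dbl C : Set (PV (Fin n ⊕ Fin n))) =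
      {p : PV (Fin n ⊕ Fin n) | ∃ c ∈ C, ∃ c' ∈ C,
        p = (Sum.elim c.1 c'.2, Sum.elim c.2 c'.1)} := by
  rw [Stmt12Aux.css_iff_mix, Stmt12Aux.set_eq_iff_mix]
end

section
/- Let C₄ ⊆ 𝔽₂⁴⊕𝔽₂⁴ be the [[4,1,2]] code spanned by (1100|0110), (0110|0011), (0011|1001) (Pauli XYZI, IXYZ, ZIXY), with logical operators L_X = (0100|1000) (Pauli ZXII) and L_Z = (0010|0100) (Pauli IZXI). Let ρ be the linear map on 𝔽₂⁴⊕𝔽₂⁴ given by the cyclic qubit permutation 1→2→3→4→1 applied simultaneously to v_X and v_Z. Then ρ(C₄) = C₄, ρ(L_X) = L_Z, and ρ(L_Z) ≡ L_X modulo C₄; hence ρ induces on the one-qubit logical space C₄⊥/C₄ the map exchanging the classes [L_X] and [L_Z], i.e. a logical Hadamard gate. -/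
open scoped BigOperators

/-- Pauli `XYZI` = `(1100|0110)`. -/
def g1 : PV (Fin 4) := (![1,1,0,0], ![0,1,1,0])
/-- Pauli `IXYZ` = `(0110|0011)`. -/
def g2 : PV (Fin 4) := (![0,1,1,0], ![0,0,1,1])
/-- Pauli `ZIXY` = `(0011|1001)`. -/
def g3 : PV (Fin 4) := (![0,0,1,1], ![1,0,0,1])

/-- The `[[4,1,2]]` code spanned by `XYZI, IXYZ, ZIXY`. -/
def C4 : Submodule F2 (PV (Fin 4)) := Submodule.span F2 {g1, g2, g3}

/-- Logical `ZXII` = `(0100|1000)`. -/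
def LX : PV (Fin 4) := (![0,1,0,0], ![1,0,0,0])
/-- Logical `IZXI` = `(0010|0100)`. -/
def LZ : PV (Fin 4) := (![0,0,1,0], ![0,1,0,0])

/-- The cyclic qubit permutation `1→2→3→4→1` (i.e. `i ↦ i+1`). -/
def rho : Equiv.Perm (Fin 4) := finRotate 4

def rhoLM : PV (Fin 4) →ₗ[F2] PV (Fin 4) where
  toFun := permPV rho
  map_add' v w := by simp [permPV, Prod.ext_iff]; constructor <;> rfl
  map_smul' r v := by simp [permPV, Prod.ext_iff]; constructor <;> rfl

lemma hg1 : rhoLM g1 = g2 := by decide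
lemma hg2 : rhoLM g2 = g3 := by decide
lemma hg3 : rhoLM g3 = g1 + g2 + g3 := by decide

lemma map_C4 : Submodule.map rhoLM C4 = C4 := by
  have m1 : g1 ∈ C4 := Submodule.subset_span (by simp)
  have m2 : g2 ∈ C4 := Submodule.subset_span (by simp)
  have m3 : g3 ∈ C4 := Submodule.subset_span (by simp)
  rw [C4, Submodule.map_span]
  apply le_antisymm
  · rw [Submodule.span_le]
    rintro x ⟨y, hy, rfl⟩
    rcases hy with rfl | rfl | rfl
    · rw [hg1]; exact m2
    · rw [hg2]; exact m3
    · rw [hg3]; exact add_mem (add_mem m1 m2) m3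
  · rw [← C4, C4, Submodule.span_le]
    have i1 : rhoLM g1 ∈ Submodule.span F2 (rhoLM '' {g1, g2, g3}) :=
      Submodule.subset_span ⟨g1, by simp, rfl⟩
    have i2 : rhoLM g2 ∈ Submodule.span F2 (rhoLM '' {g1, g2, g3}) :=
      Submodule.subset_span ⟨g2, by simp, rfl⟩
    have i3 : rhoLM g3 ∈ Submodule.span F2 (rhoLM '' {g1, g2, g3}) :=
      Submodule.subset_span ⟨g3, by simp, rfl⟩
    have hsum : rhoLM g3 + rhoLM g1 + rhoLM g2 ∈
        Submodule.span F2 (rhoLM '' {g1, g2, g3}) := add_mem (add_mem i3 i1) i2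
    have heq : rhoLM g3 + rhoLM g1 + rhoLM g2 = g1 := by decide
    rintro x (rfl | rfl | rfl)
    · rwa [heq] at hsum
    · rwa [hg1] at i1
    · rwa [hg2] at i2

/-- The cyclic qubit permutation `ρ : 1→2→3→4→1` preserves `C₄`, sends `L_X` to `L_Z`,
and sends `L_Z` to `L_X` modulo `C₄`; hence it induces on the logical space `C₄⊥/C₄`
the exchange of `[L_X]` and `[L_Z]`, i.e. a logical Hadamard gate. -/
theorem stmt14 :
    permPV rho '' (C4 : Set (PV (Fin 4))) = (C4 : Set (PV (Fin 4))) ∧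
    permPV rho LX = LZ ∧
    permPV rho LZ - LX ∈ C4 := by
  refine ⟨?_, by decide, ?_⟩
  · have : permPV rho '' (C4 : Set (PV (Fin 4))) = ↑(Submodule.map rhoLM C4) := by
      rw [Submodule.map_coe]; rfl
    rw [this, map_C4]
  · have h : permPV rho LZ - LX = g2 + g3 := by decide
    rw [h]
    exact add_mem (Submodule.subset_span (by simp)) (Submodule.subset_span (by simp))
end

section
/- Let C₄ ⊆ 𝔽₂⁴⊕𝔽₂⁴ be the [[4,1,2]] code spanned by (1100|0110), (0110|0011), (0011|1001) (Pauli XYZI, IXYZ, ZIXY), with logical operators L_X = (0100|1000) and L_Z = (0010|0100). For every A ∈ GL(2,𝔽₂) there exist a permutation σ of {1,2,3,4} and matrices g₁, g₂, g₃, g₄ ∈ GL(2,𝔽₂) such that the linear map g on 𝔽₂⁴⊕𝔽₂⁴ that first permutes the qubits by σ (simultaneously on v_X, v_Z) and then applies gᵢ to the pair (v_X i, v_Z i) for each i, satisfies g(C₄) = C₄ and induces the matrix A on the logical space C₄⊥/C₄ with respect to the basis ([L_X], [L_Z]). Thus qubit permutations followed by local Cliffords realize the full single-qubit logical Clifford group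 Sp(2,𝔽₂) = GL(2,𝔽₂) on this code. -/
open scoped BigOperators

/-- A local Clifford at the symplectic level: apply `gᵢ ∈ GL(2,𝔽₂)` to the pair
`(v_X i, v_Z i)` for each qubit `i`. -/
def localApply {ι : Type} (g : ι → Matrix.GeneralLinearGroup (Fin 2) F2) (v : PV ι) : PV ι :=
  (fun i => (g i : Matrix (Fin 2) (Fin 2) F2) 0 0 * v.1 i
      + (g i : Matrix (Fin 2) (Fin 2) F2) 0 1 * v.2 i,
   fun i => (g i : Matrix (Fin 2) (Fin 2) F2) 1 0 * v.1 i
      + (g i : Matrix (Fin 2) (Fin 2) F2) 1 1 * v.2 i)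

section Aux

/-- Explicit list of the 8 elements of `C4`. -/
def S8 : Finset (PV (Fin 4)) :=
  {((![0,0,0,0], ![0,0,0,0]) : PV (Fin 4)),
   (![1,1,0,0], ![0,1,1,0]),
   (![0,1,1,0], ![0,0,1,1]),
   (![0,0,1,1], ![1,0,0,1]),
   (![1,0,1,0], ![0,1,0,1]),
   (![1,1,1,1], ![1,1,1,1]),
   (![0,1,0,1], ![1,0,1,0]),
   (![1,0,0,1], ![1,1,0,0])}

lemma mem_C4_iff (v : PV (Fin 4)) :
    v ∈ C4 ↔ ∃ a b c : F2, a • g1 + (b • g2 + c • g3) = v := by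
  constructor
  · intro h
    rw [C4, show ({g1, g2, g3} : Set (PV (Fin 4))) = insert g1 {g2, g3} from rfl,
      Submodule.span_insert, Submodule.mem_sup] at h
    obtain ⟨y, hy, z, hz, rfl⟩ := h
    obtain ⟨a, rfl⟩ := Submodule.mem_span_singleton.1 hy
    obtain ⟨b, c, rfl⟩ := Submodule.mem_span_pair.1 hz
    exact ⟨a, b, c, rfl⟩
  · rintro ⟨a, b, c, rfl⟩
    have h1 : g1 ∈ C4 := Submodule.subset_span (by simp)
    have h2 : g2 ∈ C4 := Submodule.subset_span (by simp)
    have h3 : g3 ∈ C4 := Submodule.subset_span (by simp)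
    exact add_mem (Submodule.smul_mem _ _ h1)
      (add_mem (Submodule.smul_mem _ _ h2) (Submodule.smul_mem _ _ h3))

set_option maxRecDepth 100000 in
lemma key : ∀ v : PV (Fin 4), (∃ a b c : F2, a • g1 + (b • g2 + c • g3) = v) ↔ v ∈ S8 := by
  decide

lemma C4_set : (C4 : Set (PV (Fin 4))) = ↑S8 :=
  Set.ext fun v => by rw [SetLike.mem_coe, mem_C4_iff, Finset.mem_coe]; exact key v

/-- The six elements of `GL(2, 𝔽₂)`. -/
def mI : Matrix.GeneralLinearGroup (Fin 2) F2 := ⟨!![1,0;0,1], !![1,0;0,1], by decide, by decide⟩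
def mH : Matrix.GeneralLinearGroup (Fin 2) F2 := ⟨!![0,1;1,0], !![0,1;1,0], by decide, by decide⟩
def mS : Matrix.GeneralLinearGroup (Fin 2) F2 := ⟨!![1,1;0,1], !![1,1;0,1], by decide, by decide⟩
def mT : Matrix.GeneralLinearGroup (Fin 2) F2 := ⟨!![1,0;1,1], !![1,0;1,1], by decide, by decide⟩
def mW : Matrix.GeneralLinearGroup (Fin 2) F2 := ⟨!![0,1;1,1], !![1,1;1,0], by decide, by decide⟩
def mV : Matrix.GeneralLinearGroup (Fin 2) F2 := ⟨!![1,1;1,0], !![0,1;1,1], by decide, by decide⟩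

/-- Permutations used. -/
def pA : Equiv.Perm (Fin 4) := ⟨![0,3,2,1], ![0,3,2,1], by decide, by decide⟩
def pB : Equiv.Perm (Fin 4) := ⟨![0,3,1,2], ![0,2,3,1], by decide, by decide⟩
def pC : Equiv.Perm (Fin 4) := ⟨![0,2,1,3], ![0,2,1,3], by decide, by decide⟩
def pD : Equiv.Perm (Fin 4) := ⟨![0,1,3,2], ![0,1,3,2], by decide, by decide⟩
def pE : Equiv.Perm (Fin 4) := ⟨![0,2,3,1], ![0,3,1,2], by decide, by decide⟩
def pI : Equiv.Perm (Fin 4) := ⟨![0,1,2,3], ![0,1,2,3], by decide, by decide⟩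

set_option maxRecDepth 100000 in
lemma matclass : ∀ M N : Matrix (Fin 2) (Fin 2) F2, M * N = 1 →
    M = !![1,0;0,1] ∨ M = !![1,1;0,1] ∨ M = !![1,0;1,1] ∨ M = !![0,1;1,0] ∨
    M = !![0,1;1,1] ∨ M = !![1,1;1,0] := by
  decide

end Aux


set_option maxRecDepth 100000 in
/-- For every `A ∈ GL(2,𝔽₂)` there are a qubit permutation `σ` of `{1,2,3,4}` and
local Cliffords `g₁,…,g₄ ∈ GL(2,𝔽₂)` such that the map `h` that permutes qubits by `σ`
and then applies `gᵢ` on each qubit preserves `C₄`, and induces the matrix `A` on the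
logical space `C₄⊥/C₄` in the basis `([L_X],[L_Z])`: qubit permutations followed by
local Cliffords realize the full single-qubit logical Clifford group
`Sp(2,𝔽₂) = GL(2,𝔽₂)` on this code. -/

theorem stmt15 :
    ∀ A : Matrix.GeneralLinearGroup (Fin 2) F2,
      ∃ (σ : Equiv.Perm (Fin 4)) (g : Fin 4 → Matrix.GeneralLinearGroup (Fin 2) F2),
        (fun v => localApply g (permPV σ v)) '' (C4 : Set (PV (Fin 4)))
            = (C4 : Set (PV (Fin 4))) ∧
        localApply g (permPV σ LX)
            - ((A : Matrix (Fin 2) (Fin 2) F2) 0 0 • LX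
                + (A : Matrix (Fin 2) (Fin 2) F2) 1 0 • LZ) ∈ C4 ∧
        localApply g (permPV σ LZ)
            - ((A : Matrix (Fin 2) (Fin 2) F2) 0 1 • LX
                + (A : Matrix (Fin 2) (Fin 2) F2) 1 1 • LZ) ∈ C4 := by
  intro A
  have hinv : (A : Matrix (Fin 2) (Fin 2) F2) * ((A⁻¹ : Matrix.GeneralLinearGroup (Fin 2) F2) :
      Matrix (Fin 2) (Fin 2) F2) = 1 := A.mul_inv
  rcases matclass _ _ hinv with hM | hM | hM | hM | hM | hM
  · exact ⟨pI, ![mI, mI, mI, mI], by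
      rw [C4_set, ← Finset.coe_image]; exact congrArg _ (by decide),
      by rw [hM, mem_C4_iff]; decide, by rw [hM, mem_C4_iff]; decide⟩
  · exact ⟨pD, ![mT, mS, mW, mV], by
      rw [C4_set, ← Finset.coe_image]; exact congrArg _ (by decide),
      by rw [hM, mem_C4_iff]; decide, by rw [hM, mem_C4_iff]; decide⟩
  · exact ⟨pC, ![mS, mW, mV, mT], by
      rw [C4_set, ← Finset.coe_image]; exact congrArg _ (by decide),
      by rw [hM, mem_C4_iff]; decide, by rw [hM, mem_C4_iff]; decide⟩
  · exact ⟨pA, ![mH, mH, mH, mH], by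
      rw [C4_set, ← Finset.coe_image]; exact congrArg _ (by decide),
      by rw [hM, mem_C4_iff]; decide, by rw [hM, mem_C4_iff]; decide⟩
  · exact ⟨pB, ![mV, mT, mS, mW], by
      rw [C4_set, ← Finset.coe_image]; exact congrArg _ (by decide),
      by rw [hM, mem_C4_iff]; decide, by rw [hM, mem_C4_iff]; decide⟩
  · exact ⟨pE, ![mW, mV, mT, mS], by
      rw [C4_set, ← Finset.coe_image]; exact congrArg _ (by decide),
      by rw [hM, mem_C4_iff]; decide, by rw [hM, mem_C4_iff]; decide⟩
end
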